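/- arXiv:2206.05657 — 5 statements merged into one kernel-verified Lean document; each statement's English description precedes it below -/
import Mathlib

section
/- Let V be a finite nonempty type, f a monotone submodular function on finite subsets of V, b a positive integer, and OPT a finite subset of V with |OPT| ≤ b. Then for every finite set S ⊆ V, max_{x ∈ V} ( f(S ∪ {x}) − f(S) ) ≥ (1/b) · ( f(OPT) − f(S) ). -/
lemma marginal_sum_bound {V : Type*} [DecidableEq V]
    (f : Finset V → ℝ)
    (hmono : ∀ S T : Finset V, S ⊆ T → f S ≤ f T)
    (hsub : ∀ S T : Finset V, S ⊆ T → ∀ v ∉ T,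
      f (insert v S) - f S ≥ f (insert v T) - f T)
    (S : Finset V) (T : Finset V) :
    f (S ∪ T) - f S ≤ ∑ x ∈ T, (f (insert x S) - f S) := by
  induction T using Finset.induction with
  | empty => simp
  | @insert a T' ha ih =>
    rw [Finset.sum_insert ha]
    have key : f (S ∪ insert a T') - f (S ∪ T') ≤ f (insert a S) - f S := by
      by_cases haST : a ∈ S ∪ T'
      · rw [Finset.union_insert, Finset.insert_eq_self.2 haST]
        have := hmono S (insert a S) (Finset.subset_insert a S)
        linarith
      · have := hsub S (S ∪ T') Finset.subset_union_left a haST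
        rw [Finset.union_insert]
        linarith
    linarith

/-- For a monotone submodular f, positive integer b and OPT with |OPT| ≤ b,
for every finite set S, max_{x ∈ V} ( f(S ∪ {x}) − f(S) ) ≥ (1/b)(f(OPT) − f(S)). -/
theorem greedy_max_gain_lower_bound {V : Type*} [Fintype V] [Nonempty V] [DecidableEq V]
    (f : Finset V → ℝ)
    (hmono : ∀ S T : Finset V, S ⊆ T → f S ≤ f T)
    (hsub : ∀ S T : Finset V, S ⊆ T → ∀ v ∉ T,
      f (insert v S) - f S ≥ f (insert v T) - f T)
    (b : ℕ) (hb : 0 < b) (OPT : Finset V) (hOPT : OPT.card ≤ b)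
    (S : Finset V) :
    Finset.univ.sup' Finset.univ_nonempty (fun x => f (insert x S) - f S) ≥
      (1 / (b : ℝ)) * (f OPT - f S) := by
  set M := Finset.univ.sup' Finset.univ_nonempty (fun x => f (insert x S) - f S) with hM
  have hMx : ∀ x : V, f (insert x S) - f S ≤ M := fun x =>
    Finset.le_sup' (fun x => f (insert x S) - f S) (Finset.mem_univ x)
  have hM0 : 0 ≤ M := by
    obtain ⟨x⟩ := ‹Nonempty V›
    have := hmono S (insert x S) (Finset.subset_insert x S)
    have := hMx x
    linarith
  have h1 : f OPT - f S ≤ f (S ∪ OPT) - f S := by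
    have := hmono OPT (S ∪ OPT) Finset.subset_union_right
    linarith
  have h2 := marginal_sum_bound f hmono hsub S OPT
  have h3 : ∑ x ∈ OPT, (f (insert x S) - f S) ≤ (OPT.card : ℝ) * M := by
    calc ∑ x ∈ OPT, (f (insert x S) - f S) ≤ ∑ _x ∈ OPT, M :=
          Finset.sum_le_sum fun x _ => hMx x
      _ = (OPT.card : ℝ) * M := by rw [Finset.sum_const, nsmul_eq_mul]
  have h4 : (OPT.card : ℝ) * M ≤ (b : ℝ) * M :=
    mul_le_mul_of_nonneg_right (by exact_mod_cast hOPT) hM0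
  have hbpos : (0 : ℝ) < b := by exact_mod_cast hb
  rw [ge_iff_le, one_div, inv_mul_le_iff₀ hbpos, mul_comm]
  linarith
end

section
/- Let V be a finite nonempty type, f a monotone submodular function on finite subsets of V, b a positive integer, and OPT a finite subset of V with |OPT| ≤ b. Then for every finite set S ⊆ V, f(OPT) ≤ f(S) + b · max_{x ∈ V} ( f(S ∪ {x}) − f(S) ). -/
/-- For a monotone submodular f, positive integer b and OPT with |OPT| ≤ b,
for every finite set S, f(OPT) ≤ f(S) + b · max_{x ∈ V} ( f(S ∪ {x}) − f(S) ). -/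
theorem opt_le_greedy_bound {V : Type*} [Fintype V] [Nonempty V] [DecidableEq V]
    (f : Finset V → ℝ)
    (hmono : ∀ S T : Finset V, S ⊆ T → f S ≤ f T)
    (hsub : ∀ S T : Finset V, S ⊆ T → ∀ v ∉ T,
      f (insert v S) - f S ≥ f (insert v T) - f T)
    (b : ℕ) (hb : 0 < b) (OPT : Finset V) (hOPT : OPT.card ≤ b)
    (S : Finset V) :
    f OPT ≤ f S +
      (b : ℝ) * Finset.univ.sup' Finset.univ_nonempty (fun x => f (insert x S) - f S) := by
  set δ := Finset.univ.sup' Finset.univ_nonempty (fun x => f (insert x S) - f S) with hδ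
  have hgain : ∀ x : V, f (insert x S) - f S ≤ δ := fun x =>
    Finset.le_sup' (fun x => f (insert x S) - f S) (Finset.mem_univ x)
  have hδ0 : 0 ≤ δ := by
    obtain ⟨x⟩ := ‹Nonempty V›
    have : f S ≤ f (insert x S) := hmono _ _ (Finset.subset_insert x S)
    linarith [hgain x]
  -- key: f (S ∪ T) - f S ≤ ∑ gains
  have key : ∀ T : Finset V, f (S ∪ T) - f S ≤ ∑ x ∈ T, (f (insert x S) - f S) := by
    intro T
    induction T using Finset.induction_on with
    | empty => simp
    | @insert a T' ha ih =>
      rw [Finset.sum_insert ha]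
      have hnn : 0 ≤ f (insert a S) - f S := by
        linarith [hmono S (insert a S) (Finset.subset_insert a S)]
      by_cases haS : a ∈ S ∪ T'
      · have : S ∪ insert a T' = S ∪ T' := by
          rw [Finset.union_insert, Finset.insert_eq_self.mpr haS]
        rw [this]; linarith
      · have h1 : f (insert a (S ∪ T')) - f (S ∪ T') ≤ f (insert a S) - f S :=
          hsub S (S ∪ T') Finset.subset_union_left a haS
        have h2 : S ∪ insert a T' = insert a (S ∪ T') := Finset.union_insert ..
        rw [h2]; linarith
  have h3 : f OPT ≤ f (S ∪ OPT) := hmono _ _ Finset.subset_union_right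
  have h4 : ∑ x ∈ OPT, (f (insert x S) - f S) ≤ (OPT.card : ℝ) * δ := by
    calc ∑ x ∈ OPT, (f (insert x S) - f S) ≤ ∑ _x ∈ OPT, δ :=
          Finset.sum_le_sum fun x _ => hgain x
      _ = (OPT.card : ℝ) * δ := by simp [mul_comm]
  have h5 : (OPT.card : ℝ) * δ ≤ (b : ℝ) * δ := by
    apply mul_le_mul_of_nonneg_right _ hδ0
    exact_mod_cast hOPT
  linarith [key OPT]
end

section
/- Let V be a finite nonempty type, f a monotone submodular function on finite subsets of V with f(∅) = 0, and b a positive integer. Define the greedy sequence S_0 = ∅ and S_i = S_{i−1} ∪ {x_i} for 1 ≤ i ≤ b, where x_i is any element of V maximizing f(S_{i−1} ∪ {x}) − f(S_{i−1}) over x ∈ V. Then for every finite set OPT ⊆ V with |OPT| ≤ b, f(S_b) ≥ ( 1 − (1 − 1/b)^b ) · f(OPT) ≥ (1 − 1/e) · f(OPT). -/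
/-- Greedy hill-climbing on a monotone submodular function f with f(∅) = 0:
the greedy sequence S_0 = ∅, S_i = S_{i−1} ∪ {x_i}, where x_i maximizes the
marginal gain f(S_{i−1} ∪ {x}) − f(S_{i−1}) over x ∈ V, satisfies
f(S_b) ≥ (1 − (1 − 1/b)^b) · f(OPT) ≥ (1 − 1/e) · f(OPT)
for every OPT with |OPT| ≤ b. -/
theorem greedy_approximation_submodular {V : Type*} [Fintype V] [Nonempty V] [DecidableEq V]
    (f : Finset V → ℝ)
    (hmono : ∀ S T : Finset V, S ⊆ T → f S ≤ f T)
    (hsub : ∀ S T : Finset V, S ⊆ T → ∀ v ∉ T,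
      f (insert v S) - f S ≥ f (insert v T) - f T)
    (hempty : f ∅ = 0)
    (b : ℕ) (hb : 0 < b)
    (S : ℕ → Finset V) (x : ℕ → V)
    (hS0 : S 0 = ∅)
    (hSi : ∀ i : ℕ, 1 ≤ i → i ≤ b → S i = insert (x i) (S (i - 1)))
    (hgreedy : ∀ i : ℕ, 1 ≤ i → i ≤ b → ∀ y : V,
      f (insert y (S (i - 1))) - f (S (i - 1)) ≤
        f (insert (x i) (S (i - 1))) - f (S (i - 1)))
    (OPT : Finset V) (hOPT : OPT.card ≤ b) :
    f (S b) ≥ (1 - (1 - 1 / (b : ℝ)) ^ b) * f OPT ∧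
      (1 - (1 - 1 / (b : ℝ)) ^ b) * f OPT ≥ (1 - 1 / Real.exp 1) * f OPT := by
  have hbR : (0:ℝ) < (b:ℝ) := by exact_mod_cast hb
  have hb1 : (1:ℝ) ≤ (b:ℝ) := by exact_mod_cast hb
  have hq0 : (0:ℝ) ≤ 1 - 1/(b:ℝ) := by
    have : 1/(b:ℝ) ≤ 1 := by
      rw [div_le_one hbR]; exact hb1
    linarith
  have hf0 : 0 ≤ f OPT := by
    rw [← hempty]; exact hmono ∅ OPT (Finset.empty_subset _)
  -- telescoping bound from submodularity
  have tele : ∀ (A T : Finset V), f (A ∪ T) - f A ≤ ∑ y ∈ T, (f (insert y A) - f A) := by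
    intro A T
    induction T using Finset.induction_on with
    | empty => simp
    | @insert a T' ha ih =>
      rw [Finset.sum_insert ha, Finset.union_insert]
      have h1 : f (insert a (A ∪ T')) - f (A ∪ T') ≤ f (insert a A) - f A := by
        by_cases haA : a ∈ A ∪ T'
        · have hA : a ∈ A := by
            rcases Finset.mem_union.mp haA with h | h
            · exact h
            · exact absurd h ha
          rw [Finset.insert_eq_self.mpr haA, Finset.insert_eq_self.mpr hA]
          linarith
        · exact hsub A (A ∪ T') Finset.subset_union_left a haA
      linarith
  -- per-step contraction
  have hstep : ∀ i, i < b →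
      f OPT - f (S (i+1)) ≤ (1 - 1/(b:ℝ)) * (f OPT - f (S i)) := by
    intro i hi
    have h2 : i + 1 ≤ b := hi
    have hSeq : S (i+1) = insert (x (i+1)) (S i) := by
      have h := hSi (i+1) (by omega) h2
      simpa using h
    set g : ℝ := f (S (i+1)) - f (S i) with hg
    have hgmax : ∀ y, f (insert y (S i)) - f (S i) ≤ g := by
      intro y
      have h := hgreedy (i+1) (by omega) h2 y
      simp only [Nat.add_sub_cancel] at h
      rw [hg, hSeq]; exact h
    have hgnn : 0 ≤ g := by
      have := hgmax (x (i+1))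
      have hmono' := hmono (S i) (insert (x (i+1)) (S i)) (Finset.subset_insert _ _)
      rw [hg, hSeq]; linarith
    have hDbg : f OPT - f (S i) ≤ (b:ℝ) * g := by
      have h1 : f OPT ≤ f (S i ∪ OPT) := hmono _ _ Finset.subset_union_right
      have h2' : f (S i ∪ OPT) - f (S i) ≤ ∑ y ∈ OPT, (f (insert y (S i)) - f (S i)) :=
        tele (S i) OPT
      have h3 : ∑ y ∈ OPT, (f (insert y (S i)) - f (S i)) ≤ (OPT.card : ℝ) * g := by
        calc ∑ y ∈ OPT, (f (insert y (S i)) - f (S i)) ≤ ∑ _y ∈ OPT, g :=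
              Finset.sum_le_sum (fun y _ => hgmax y)
          _ = (OPT.card : ℝ) * g := by rw [Finset.sum_const, nsmul_eq_mul]
      have h4 : (OPT.card : ℝ) * g ≤ (b:ℝ) * g := by
        apply mul_le_mul_of_nonneg_right _ hgnn
        exact_mod_cast hOPT
      linarith
    have hdiv : (1/(b:ℝ)) * (f OPT - f (S i)) ≤ g := by
      rw [one_div, inv_mul_le_iff₀ hbR]
      exact hDbg
    have : f (S (i+1)) = f (S i) + g := by rw [hg]; ring
    rw [this, sub_mul, one_mul]
    linarith
  -- main induction
  have main : ∀ i, i ≤ b → f OPT - f (S i) ≤ (1 - 1/(b:ℝ))^i * f OPT := by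
    intro i
    induction i with
    | zero => intro _; rw [hS0, hempty]; simp
    | succ n ih =>
      intro hn
      have hnb : n < b := by omega
      have h1 := hstep n hnb
      have h2 := ih (by omega)
      calc f OPT - f (S (n+1)) ≤ (1 - 1/(b:ℝ)) * (f OPT - f (S n)) := h1
        _ ≤ (1 - 1/(b:ℝ)) * ((1 - 1/(b:ℝ))^n * f OPT) :=
            mul_le_mul_of_nonneg_left h2 hq0
        _ = (1 - 1/(b:ℝ))^(n+1) * f OPT := by ring
  have hfirst : f (S b) ≥ (1 - (1 - 1 / (b : ℝ)) ^ b) * f OPT := by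
    have := main b le_rfl
    rw [ge_iff_le, sub_mul, one_mul]
    linarith
  refine ⟨hfirst, ?_⟩
  -- second inequality
  have hexp : (1 - 1/(b:ℝ))^b ≤ 1 / Real.exp 1 := by
    have h1 : 1 - 1/(b:ℝ) ≤ Real.exp (-(1/(b:ℝ))) := by
      have := Real.add_one_le_exp (-(1/(b:ℝ)))
      linarith
    have h2 : (1 - 1/(b:ℝ))^b ≤ (Real.exp (-(1/(b:ℝ))))^b :=
      pow_le_pow_left₀ hq0 h1 b
    have h3 : (Real.exp (-(1/(b:ℝ))))^b = Real.exp (-1) := by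
      rw [← Real.exp_nat_mul]
      congr 1
      field_simp
    rw [h3] at h2
    rwa [Real.exp_neg, ← one_div] at h2
  have : (1 - 1 / Real.exp 1) ≤ (1 - (1 - 1/(b:ℝ))^b) := by linarith
  exact mul_le_mul_of_nonneg_right this hf0
end

section
/- Let V be a finite nonempty type, K : V → Finset V, and ρ(S) = |⋃_{s ∈ S} K(s)| the local user engagement function. Let b be a positive integer and define the greedy hill-climbing sequence S_0 = ∅, S_i = S_{i−1} ∪ {x_i} where x_i maximizes ρ(S_{i−1} ∪ {x}) over x ∈ V. Then for every finite set OPT ⊆ V with |OPT| ≤ b, ρ(S_b) ≥ (1 − 1/e) · ρ(OPT); i.e., the greedy algorithm for the Local User Engagement Maximization problem achieves a (1 − 1/e)-approximation. -/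
/-- The greedy hill-climbing algorithm for the Local User Engagement
Maximization problem achieves a (1 − 1/e)-approximation: with
ρ(S) = |⋃_{s ∈ S} K(s)|, S_0 = ∅ and S_i = S_{i−1} ∪ {x_i} where x_i
maximizes ρ(S_{i−1} ∪ {x}) over x ∈ V, we have
ρ(S_b) ≥ (1 − 1/e) · ρ(OPT) for every OPT with |OPT| ≤ b. -/
theorem luem_greedy_approximation {V : Type*} [Fintype V] [Nonempty V] [DecidableEq V]
    (K : V → Finset V)
    (b : ℕ) (hb : 0 < b)
    (S : ℕ → Finset V) (x : ℕ → V)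
    (hS0 : S 0 = ∅)
    (hSi : ∀ i : ℕ, 1 ≤ i → i ≤ b → S i = insert (x i) (S (i - 1)))
    (hgreedy : ∀ i : ℕ, 1 ≤ i → i ≤ b → ∀ y : V,
      ((insert y (S (i - 1))).biUnion K).card ≤
        ((insert (x i) (S (i - 1))).biUnion K).card)
    (OPT : Finset V) (hOPT : OPT.card ≤ b) :
    (((S b).biUnion K).card : ℝ) ≥
      (1 - 1 / Real.exp 1) * ((OPT.biUnion K).card : ℝ) := by
  set ρ : Finset V → ℕ := fun T => (T.biUnion K).card with hρ
  have hbR : (0:ℝ) < b := by exact_mod_cast hb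
  -- key per-step inequality
  have key : ∀ i : ℕ, 1 ≤ i → i ≤ b →
      (ρ OPT : ℝ) - ρ (S (i-1)) ≤ (b:ℝ) * ((ρ (S i) : ℝ) - ρ (S (i-1))) := by
    intro i h1 h2
    set T := S (i-1) with hT
    set A := T.biUnion K with hA
    -- marginal of inserting o
    have hins : ∀ o : V, ρ (insert o T) = (K o \ A).card + A.card := by
      intro o
      have : (insert o T).biUnion K = K o ∪ A := by
        rw [Finset.biUnion_insert]
      simp only [hρ, this]
      rw [Finset.card_sdiff_add_card]
    -- monotone step gap nonneg
    have hSi' := hSi i h1 h2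
    have hstep : (ρ T : ℝ) ≤ ρ (S i) := by
      have : T ⊆ S i := by rw [hSi']; exact Finset.subset_insert _ _
      exact_mod_cast Finset.card_le_card (Finset.biUnion_subset_biUnion_of_subset_left K this)
    -- each marginal ≤ greedy gap
    have heach : ∀ o ∈ OPT, ((K o \ A).card : ℝ) ≤ (ρ (S i) : ℝ) - ρ T := by
      intro o _
      have h3 := hgreedy i h1 h2 o
      have h4 : ρ (insert o T) ≤ ρ (S i) := by
        rw [hSi']; exact h3
      have h5 := hins o
      have hAc : ρ T = A.card := rfl
      have : ((K o \ A).card : ℝ) + A.card ≤ ρ (S i) := by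
        exact_mod_cast h5 ▸ h4
      rw [hAc]; push_cast; linarith
    -- cover inequality: ρ OPT ≤ ρ T + Σ marginals
    have hsub : OPT.biUnion K \ A ⊆ OPT.biUnion (fun o => K o \ A) := by
      intro v hv
      simp only [Finset.mem_sdiff, Finset.mem_biUnion] at hv ⊢
      obtain ⟨⟨o, ho, hvo⟩, hvA⟩ := hv
      exact ⟨o, ho, by simp [Finset.mem_sdiff, hvo, hvA]⟩
    have hcov : ρ OPT ≤ A.card + ∑ o ∈ OPT, (K o \ A).card := by
      calc ρ OPT ≤ (OPT.biUnion K \ A).card + A.card :=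
            Finset.card_le_card_sdiff_add_card
        _ ≤ (OPT.biUnion (fun o => K o \ A)).card + A.card := by
            exact Nat.add_le_add_right (Finset.card_le_card hsub) _
        _ ≤ (∑ o ∈ OPT, (K o \ A).card) + A.card := by
            exact Nat.add_le_add_right Finset.card_biUnion_le _
        _ = A.card + ∑ o ∈ OPT, (K o \ A).card := by ring
    have hcovR : (ρ OPT : ℝ) ≤ (ρ T : ℝ) + ∑ o ∈ OPT, ((K o \ A).card : ℝ) := by
      have : (ρ T : ℕ) = A.card := rfl
      push_cast [this] at hcov ⊢
      exact_mod_cast hcov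
    have hsum : ∑ o ∈ OPT, ((K o \ A).card : ℝ) ≤ (OPT.card : ℝ) * ((ρ (S i) : ℝ) - ρ T) := by
      calc ∑ o ∈ OPT, ((K o \ A).card : ℝ) ≤ ∑ _o ∈ OPT, ((ρ (S i) : ℝ) - ρ T) :=
            Finset.sum_le_sum heach
        _ = (OPT.card : ℝ) * ((ρ (S i) : ℝ) - ρ T) := by
            rw [Finset.sum_const, nsmul_eq_mul]
    have hcard : (OPT.card : ℝ) ≤ b := by exact_mod_cast hOPT
    have : (OPT.card : ℝ) * ((ρ (S i) : ℝ) - ρ T) ≤ (b:ℝ) * ((ρ (S i) : ℝ) - ρ T) := by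
      apply mul_le_mul_of_nonneg_right hcard
      linarith
    linarith
  -- induction
  have main : ∀ i : ℕ, i ≤ b →
      (ρ OPT : ℝ) - ρ (S i) ≤ (1 - 1/(b:ℝ))^i * ρ OPT := by
    intro i
    induction i with
    | zero => intro _; simp [hS0, hρ]
    | succ n ih =>
      intro hnb
      have hn : n ≤ b := Nat.le_of_succ_le hnb
      have ihn := ih hn
      have hk := key (n+1) (Nat.le_add_left 1 n) hnb
      simp only [Nat.add_sub_cancel] at hk
      have hfac : (0:ℝ) ≤ 1 - 1/(b:ℝ) := by
        rw [sub_nonneg, div_le_one hbR]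
        exact_mod_cast hb
      have step : (ρ OPT : ℝ) - ρ (S (n+1)) ≤ (1 - 1/(b:ℝ)) * ((ρ OPT : ℝ) - ρ (S n)) := by
        have h1 : ((ρ OPT : ℝ) - ρ (S n)) / b ≤ (ρ (S (n+1)) : ℝ) - ρ (S n) := by
          rw [div_le_iff₀ hbR]; linarith
        have : (1 - 1/(b:ℝ)) * ((ρ OPT : ℝ) - ρ (S n)) =
            ((ρ OPT : ℝ) - ρ (S n)) - ((ρ OPT : ℝ) - ρ (S n)) / b := by
          field_simp
        rw [this]; linarith
      calc (ρ OPT : ℝ) - ρ (S (n+1)) ≤ (1 - 1/(b:ℝ)) * ((ρ OPT : ℝ) - ρ (S n)) := step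
        _ ≤ (1 - 1/(b:ℝ)) * ((1 - 1/(b:ℝ))^n * ρ OPT) :=
            mul_le_mul_of_nonneg_left ihn hfac
        _ = (1 - 1/(b:ℝ))^(n+1) * ρ OPT := by ring
  have hmb := main b le_rfl
  -- (1 - 1/b)^b ≤ 1/e
  have hfac : (0:ℝ) ≤ 1 - 1/(b:ℝ) := by
    rw [sub_nonneg, div_le_one hbR]; exact_mod_cast hb
  have hexp : (1 - 1/(b:ℝ)) ≤ Real.exp (-(1/(b:ℝ))) := by
    have := Real.add_one_le_exp (-(1/(b:ℝ)))
    linarith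
  have hpow : (1 - 1/(b:ℝ))^b ≤ 1 / Real.exp 1 := by
    calc (1 - 1/(b:ℝ))^b ≤ (Real.exp (-(1/(b:ℝ))))^b := pow_le_pow_left₀ hfac hexp b
      _ = Real.exp ((b:ℕ) * (-(1/(b:ℝ)))) := by rw [← Real.exp_nat_mul]
      _ = Real.exp (-1) := by
          congr 1
          field_simp
      _ = 1 / Real.exp 1 := by rw [Real.exp_neg]; ring
  have hOPTnn : (0:ℝ) ≤ (ρ OPT : ℝ) := Nat.cast_nonneg _
  have : (1 - 1/(b:ℝ))^b * ρ OPT ≤ (1 / Real.exp 1) * ρ OPT :=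
    mul_le_mul_of_nonneg_right hpow hOPTnn
  simp only [hρ] at hmb this ⊢
  linarith
end

section
/- Let G be a simple graph on a finite vertex type V, let k, r be natural numbers, and let s ∈ V. Suppose H₁ and H₂ are sets of vertices such that each H_i contains s, the induced subgraph G[H_i] is connected, every vertex of H_i has at least k neighbors within H_i, and every vertex of H_i is at graph distance at most r from s in G. Then H₁ ∪ H₂ also satisfies all four properties. Consequently, any two inclusion-maximal such sets are equal, i.e., the seed-based engaged group (SEG) of s is unique. -/
/-! The four constraints survive unions of sets containing the seed: the induced subgraphs are
glued at `s`, neighbourhoods inside `H₁ ∪ H₂` only grow (here finiteness is needed, since `ncard`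
of an infinite set is `0`), and the distance bound is pointwise. So the union of two maximal sets
is feasible and contains both, forcing them to be equal. -/

/-- H satisfies the user engagement constraint (connected induced subgraph with
minimum degree ≥ k) and the distance constraint (contains the seed s and every
vertex is within graph distance r from s). -/
def SEGProp {V : Type*} (G : SimpleGraph V) (k r : ℕ) (s : V) (H : Set V) : Prop :=
  s ∈ H ∧ (G.induce H).Connected ∧
    (∀ v ∈ H, k ≤ (H ∩ G.neighborSet v).ncard) ∧
    (∀ v ∈ H, G.dist s v ≤ r)

namespace SEGProp

variable {V : Type*} {G : SimpleGraph V} {k r : ℕ} {s : V} {H₁ H₂ : Set V}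

theorem union [Finite V] (h₁ : SEGProp G k r s H₁) (h₂ : SEGProp G k r s H₂) :
    SEGProp G k r s (H₁ ∪ H₂) := by
  obtain ⟨hs₁, hconn₁, hdeg₁, hdist₁⟩ := h₁
  obtain ⟨hs₂, hconn₂, hdeg₂, hdist₂⟩ := h₂
  refine ⟨Or.inl hs₁,
    SimpleGraph.induce_union_connected hconn₁.preconnected hconn₂.preconnected ⟨s, hs₁, hs₂⟩,
    ?_, fun v hv => hv.elim (hdist₁ v) (hdist₂ v)⟩
  rintro v (hv | hv)
  · exact (hdeg₁ v hv).trans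
      (Set.ncard_le_ncard (Set.inter_subset_inter_left _ Set.subset_union_left))
  · exact (hdeg₂ v hv).trans
      (Set.ncard_le_ncard (Set.inter_subset_inter_left _ Set.subset_union_right))

end SEGProp

/-- If H₁ and H₂ both contain the seed s, induce connected subgraphs with
minimum degree at least k, and lie within distance r of s, then so does
H₁ ∪ H₂; consequently any two inclusion-maximal such sets are equal, i.e.
the seed-based engaged group (SEG) of s is unique. -/
theorem seg_union_and_unique {V : Type*} [Fintype V] (G : SimpleGraph V)
    (k r : ℕ) (s : V) (H₁ H₂ : Set V)
    (h₁ : SEGProp G k r s H₁) (h₂ : SEGProp G k r s H₂) :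
    SEGProp G k r s (H₁ ∪ H₂) ∧
      ((∀ H : Set V, SEGProp G k r s H → H₁ ⊆ H → H = H₁) →
       (∀ H : Set V, SEGProp G k r s H → H₂ ⊆ H → H = H₂) →
       H₁ = H₂) := by
  have hunion := h₁.union h₂
  refine ⟨hunion, fun hmax₁ hmax₂ => ?_⟩
  calc H₁ = H₁ ∪ H₂ := (hmax₁ _ hunion Set.subset_union_left).symm
    _ = H₂ := hmax₂ _ hunion Set.subset_union_right
end
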